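/- arXiv:2007.05246 — 3 statements merged into one kernel-verified Lean document; each statement's English description precedes it below -/
import Mathlib

section
/- For every graph G, generalized threshold function τ, and positive integer k: t_τ(G) ≥ k if and only if there exists a vertex v ∈ V(G) such that in the induced subgraph G_k^v = G[N_k[v]] with restricted threshold function τ_k^v, there is a target set containing all vertices at distance exactly k from v whose activation time is at least k. -/
/-!
Let `U = N_k[v]`. Only vertices of the sphere `G.dist v u = k` have neighbours outside `U`, so
for a set `T ⊆ U` containing the sphere, the activation process of `T ∪ Uᶜ` in `G` is that of
`T` in `G[U]` together with `Uᶜ`, round by round; in particular both have the same activation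
time, which gives `⇐`. For `⇒`, take a target set `S` of activation time `t_τ(G) ≥ k` and a
vertex `v` still inactive at time `t_τ(G) - 1`, hence at time `k - 1`, and let `T` be `S ∩ U`
together with the sphere. Activation spreads by at most one edge per round and `T ∪ Uᶜ` agrees
with `S` on the open ball of radius `k`, so `v` is inactive at time `k - 1` from `T` as well.
-/

namespace TSS

variable {V : Type*}

/-- The interval (one activation step): `S` together with all vertices having
at least `τ v` neighbors in `S`. -/
def interval (G : SimpleGraph V) (τ : V → ℕ) (S : Set V) : Set V :=
  S ∪ {v | τ v ≤ (G.neighborSet v ∩ S).ncard}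

/-- `S` is a target set if iterating the interval operator reaches all of `V`. -/
def IsTargetSet (G : SimpleGraph V) (τ : V → ℕ) (S : Set V) : Prop :=
  ∃ t : ℕ, (interval G τ)^[t] S = Set.univ

/-- The activation time of a set: least `t` with `I^[t+1] S = I^[t] S`. -/
noncomputable def actTime (G : SimpleGraph V) (τ : V → ℕ) (S : Set V) : ℕ :=
  sInf {t : ℕ | (interval G τ)^[t + 1] S = (interval G τ)^[t] S}

/-- The maximum activation time over all target sets. -/
noncomputable def maxTime (G : SimpleGraph V) (τ : V → ℕ) : ℕ :=
  sSup {t : ℕ | ∃ S : Set V, IsTargetSet G τ S ∧ actTime G τ S = t}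

/-- The activation time of a vertex `v` for an initial set `S`. -/
noncomputable def vTime (G : SimpleGraph V) (τ : V → ℕ) (S : Set V) (v : V) : ℕ :=
  sInf {k : ℕ | v ∈ (interval G τ)^[k] S}

/-- The set of vertices eventually activated from `S`. -/
def hull (G : SimpleGraph V) (τ : V → ℕ) (S : Set V) : Set V :=
  {v | ∃ k : ℕ, v ∈ (interval G τ)^[k] S}

end TSS

open TSS

theorem SimpleGraph.Adj.dist_le_dist_add_one {V : Type*} {G : SimpleGraph V} {u w : V}
    (h : G.Adj u w) (v : V) : G.dist v w ≤ G.dist v u + 1 := by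
  rcases h.diff_dist_adj (u := v) with h' | h' | h' <;> omega

theorem Set.image_val_union_compl_eq_univ_iff {V : Type*} {U : Set V} {T : Set U} :
    Subtype.val '' T ∪ Uᶜ = Set.univ ↔ T = Set.univ := by
  constructor
  · intro h
    refine Set.eq_univ_of_forall fun u => ?_
    have hu : u.1 ∈ Subtype.val '' T ∪ Uᶜ := h ▸ Set.mem_univ _
    simpa [u.2] using hu
  · rintro rfl
    rw [Set.image_univ, Subtype.range_coe, Set.union_compl_self]

namespace TSS

section Activation

variable {V : Type*} {G : SimpleGraph V} {τ : V → ℕ} {S S' : Set V}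

theorem subset_interval (S : Set V) : S ⊆ interval G τ S := Set.subset_union_left

theorem interval_mono [G.LocallyFinite] : Monotone (interval G τ) := fun _ _ h =>
  Set.union_subset_union h fun x hx => hx.trans <|
    Set.ncard_le_ncard (Set.inter_subset_inter_right _ h)
      ((G.neighborSet x).toFinite.subset Set.inter_subset_left)

theorem interval_univ : interval G τ Set.univ = Set.univ :=
  Set.eq_univ_of_univ_subset (subset_interval _)

theorem iterate_interval_mono {m n : ℕ} (h : m ≤ n) (S : Set V) :
    (interval G τ)^[m] S ⊆ (interval G τ)^[n] S :=
  Function.monotone_iterate_of_id_le (fun _ => subset_interval _) h S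

theorem IsTargetSet.mono [G.LocallyFinite] (hS : IsTargetSet G τ S) (h : S ⊆ S') :
    IsTargetSet G τ S' := by
  obtain ⟨t, ht⟩ := hS
  exact ⟨t, Set.eq_univ_of_univ_subset (ht ▸ interval_mono.iterate t h)⟩

theorem actTime_le_iff (hS : IsTargetSet G τ S) {s : ℕ} :
    actTime G τ S ≤ s ↔ (interval G τ)^[s] S = Set.univ := by
  obtain ⟨m, hm⟩ := hS
  constructor
  · intro hs
    have hfix : interval G τ ((interval G τ)^[actTime G τ S] S) =
        (interval G τ)^[actTime G τ S] S := by
      rw [← Function.iterate_succ_apply' (interval G τ)]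
      refine Nat.sInf_mem (s := {t | (interval G τ)^[t + 1] S = (interval G τ)^[t] S}) ⟨m, ?_⟩
      rw [Set.mem_ofPred_eq, Function.iterate_succ_apply', hm, interval_univ]
    have hstable : ∀ n, actTime G τ S ≤ n →
        (interval G τ)^[n] S = (interval G τ)^[actTime G τ S] S := fun n hn => by
      rw [← Nat.sub_add_cancel hn, Function.iterate_add_apply, Function.iterate_fixed hfix]
    rw [hstable s hs, ← hstable (max m s) (le_max_of_le_right hs)]
    exact Set.eq_univ_of_univ_subset (hm ▸ iterate_interval_mono (le_max_left m s) S)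
  · intro hs
    refine Nat.sInf_le ?_
    rw [Set.mem_ofPred_eq, Function.iterate_succ_apply', hs, interval_univ]

theorem actTime_le_natCard [Finite V] (S : Set V) : actTime G τ S ≤ Nat.card V := by
  have hgrowth : ∀ s ≤ actTime G τ S, s ≤ ((interval G τ)^[s] S).ncard := by
    intro s
    induction s with
    | zero => exact fun _ => Nat.zero_le _
    | succ s ih =>
      intro hs
      have hne : (interval G τ)^[s + 1] S ≠ (interval G τ)^[s] S :=
        Nat.notMem_of_lt_sInf (m := s) hs
      have hssub : (interval G τ)^[s] S ⊂ (interval G τ)^[s + 1] S :=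
        (iterate_interval_mono s.le_succ S).ssubset_of_ne hne.symm
      exact (ih (by omega)).trans_lt (Set.ncard_lt_ncard hssub (Set.toFinite _))
  calc actTime G τ S ≤ ((interval G τ)^[actTime G τ S] S).ncard := hgrowth _ le_rfl
    _ ≤ Nat.card V := Set.ncard_le_card _

theorem bddAbove_actTime [Finite V] :
    BddAbove {t : ℕ | ∃ S : Set V, IsTargetSet G τ S ∧ actTime G τ S = t} :=
  ⟨Nat.card V, fun _ ⟨S, _, hS⟩ => hS ▸ actTime_le_natCard S⟩

theorem actTime_le_maxTime [Finite V] (hS : IsTargetSet G τ S) :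
    actTime G τ S ≤ maxTime G τ :=
  le_csSup bddAbove_actTime ⟨S, hS, rfl⟩

theorem exists_actTime_eq_maxTime [Finite V] :
    ∃ S : Set V, IsTargetSet G τ S ∧ actTime G τ S = maxTime G τ :=
  Nat.sSup_mem (s := {t : ℕ | ∃ S : Set V, IsTargetSet G τ S ∧ actTime G τ S = t})
    ⟨_, Set.univ, ⟨0, rfl⟩, rfl⟩ bddAbove_actTime

end Activation

section Locality

variable {V : Type*} {G : SimpleGraph V} {τ : V → ℕ}

theorem mem_iterate_interval_congr {A B : Set V} {x : V} {s : ℕ}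
    (hAB : ∀ y, G.dist x y ≤ s → (y ∈ A ↔ y ∈ B)) :
    x ∈ (interval G τ)^[s] A ↔ x ∈ (interval G τ)^[s] B := by
  induction s generalizing x with
  | zero => exact hAB x (by simp)
  | succ s ih =>
    have hself := ih (x := x) fun y hy => hAB y (by omega)
    have hnbr : G.neighborSet x ∩ (interval G τ)^[s] A =
        G.neighborSet x ∩ (interval G τ)^[s] B := by
      ext y
      refine and_congr_right fun hxy => ih fun z hz => hAB z ?_
      have := hxy.symm.dist_le_dist_add_one z
      rw [SimpleGraph.dist_comm (u := z), SimpleGraph.dist_comm (u := z)] at this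
      omega
    simp only [Function.iterate_succ_apply', interval, Set.mem_union, Set.mem_ofPred_eq,
      hself, hnbr]

end Locality

section Restriction

variable {V : Type*} {G : SimpleGraph V} {τ : V → ℕ} {U : Set V} {T : Set U}

theorem ncard_neighborSet_induce_inter (u : U) (T : Set U) :
    ((G.induce U).neighborSet u ∩ T).ncard = (G.neighborSet u ∩ Subtype.val '' T).ncard := by
  rw [← Set.ncard_image_of_injective _ Subtype.val_injective]
  congr 1
  ext w
  constructor
  · rintro ⟨w, ⟨hadj, hw⟩, rfl⟩
    exact ⟨hadj, w, hw, rfl⟩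
  · rintro ⟨hadj, w, hw, rfl⟩
    exact ⟨w, ⟨hadj, hw⟩, rfl⟩

theorem interval_image_union_compl (hT : ∀ u : U, ∀ w ∉ U, G.Adj u w → u ∈ T) :
    interval G τ (Subtype.val '' T ∪ Uᶜ) =
      Subtype.val '' interval (G.induce U) (fun u => τ u) T ∪ Uᶜ := by
  ext x
  by_cases hx : x ∈ U
  swap
  · exact iff_of_true (subset_interval _ (Or.inr hx)) (Or.inr hx)
  lift x to U using hx
  by_cases hxT : x ∈ T
  · exact iff_of_true (subset_interval _ (Or.inl ⟨x, hxT, rfl⟩))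
      (Or.inl ⟨x, subset_interval _ hxT, rfl⟩)
  have hnbr : G.neighborSet x ∩ (Subtype.val '' T ∪ Uᶜ) =
      G.neighborSet x ∩ Subtype.val '' T := by
    ext w
    exact and_congr_right fun hxw => or_iff_left fun hwU => hxT (hT x w hwU hxw)
  simp only [interval, Set.mem_union, Set.mem_image, Subtype.val_injective.eq_iff,
    exists_eq_right, Set.mem_compl_iff, Subtype.coe_prop, not_true_eq_false, or_false,
    Set.mem_ofPred_eq, hnbr, ncard_neighborSet_induce_inter, hxT, false_or]

theorem iterate_interval_image_union_compl (hT : ∀ u : U, ∀ w ∉ U, G.Adj u w → u ∈ T)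
    (s : ℕ) :
    (interval G τ)^[s] (Subtype.val '' T ∪ Uᶜ) =
      Subtype.val '' (interval (G.induce U) (fun u => τ u))^[s] T ∪ Uᶜ := by
  induction s with
  | zero => rfl
  | succ s ih =>
    rw [Function.iterate_succ_apply', Function.iterate_succ_apply', ih]
    exact interval_image_union_compl fun u w hw huw =>
      iterate_interval_mono (Nat.zero_le s) T (hT u w hw huw)

theorem isTargetSet_image_union_compl_iff (hT : ∀ u : U, ∀ w ∉ U, G.Adj u w → u ∈ T) :
    IsTargetSet G τ (Subtype.val '' T ∪ Uᶜ) ↔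
      IsTargetSet (G.induce U) (fun u => τ u) T := by
  simp only [IsTargetSet, iterate_interval_image_union_compl hT,
    Set.image_val_union_compl_eq_univ_iff]

theorem actTime_image_union_compl (hT : ∀ u : U, ∀ w ∉ U, G.Adj u w → u ∈ T)
    (hTS : IsTargetSet (G.induce U) (fun u => τ u) T) :
    actTime G τ (Subtype.val '' T ∪ Uᶜ) = actTime (G.induce U) (fun u => τ u) T := by
  have hS := (isTargetSet_image_union_compl_iff hT).2 hTS
  have h (s : ℕ) : actTime G τ (Subtype.val '' T ∪ Uᶜ) ≤ s ↔
      actTime (G.induce U) (fun u => τ u) T ≤ s := by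
    rw [actTime_le_iff hS, actTime_le_iff hTS, iterate_interval_image_union_compl hT,
      Set.image_val_union_compl_eq_univ_iff]
  exact le_antisymm ((h _).2 le_rfl) ((h _).1 le_rfl)

end Restriction

section Ball

variable {V : Type*} {G : SimpleGraph V} {τ : V → ℕ} {v : V} {k : ℕ}

/-- `N_k[v]`. As `G.dist v u = 0` for `u` unreachable from `v`, it also contains the other
components of `G`, which never interact with the component of `v`. -/
abbrev ball (G : SimpleGraph V) (v : V) (k : ℕ) : Set V := {u | G.dist v u ≤ k}

theorem forall_adj_compl_ball_mem {T : Set (ball G v k)}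
    (hT : ∀ u : ball G v k, G.dist v u = k → u ∈ T) :
    ∀ u : ball G v k, ∀ w ∉ ball G v k, G.Adj u w → u ∈ T := fun u w hw huw => by
  have hu : G.dist v u ≤ k := u.2
  have hw : ¬G.dist v w ≤ k := hw
  exact hT u (by have := huw.dist_le_dist_add_one v; omega)

theorem exists_ball_targetSet_le_actTime [G.LocallyFinite] {S : Set V}
    (hS : IsTargetSet G τ S) (hk : 0 < k) (hv : v ∉ (interval G τ)^[k - 1] S) :
    ∃ T : Set (ball G v k), (∀ u : ball G v k, G.dist v u = k → u ∈ T) ∧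
      IsTargetSet (G.induce (ball G v k)) (fun u => τ u) T ∧
      k ≤ actTime (G.induce (ball G v k)) (fun u => τ u) T := by
  set T : Set (ball G v k) := {u | u.1 ∈ S ∨ G.dist v u = k}
  have hsphere : ∀ u : ball G v k, G.dist v u = k → u ∈ T := fun u hu => Or.inr hu
  have hbd := forall_adj_compl_ball_mem hsphere
  have hST : S ⊆ Subtype.val '' T ∪ (ball G v k)ᶜ := fun x hx => by
    by_cases hxU : x ∈ ball G v k
    · exact Or.inl ⟨⟨x, hxU⟩, Or.inl hx, rfl⟩
    · exact Or.inr hxU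
  have hagree : ∀ y, G.dist v y ≤ k - 1 →
      (y ∈ S ↔ y ∈ Subtype.val '' T ∪ (ball G v k)ᶜ) := by
    intro y hy
    have hyU : y ∈ ball G v k := show G.dist v y ≤ k by omega
    refine ⟨fun hyS => Or.inl ⟨⟨y, hyU⟩, Or.inl hyS, rfl⟩, ?_⟩
    rintro (⟨u, hu | hu, rfl⟩ | hyU')
    · exact hu
    · omega
    · exact absurd hyU hyU'
  have hTS : IsTargetSet G τ (Subtype.val '' T ∪ (ball G v k)ᶜ) := hS.mono hST
  have hT := (isTargetSet_image_union_compl_iff hbd).1 hTS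
  refine ⟨T, hsphere, hT, ?_⟩
  have hslow : ¬actTime G τ (Subtype.val '' T ∪ (ball G v k)ᶜ) ≤ k - 1 := by
    rw [actTime_le_iff hTS]
    intro huniv
    exact hv ((mem_iterate_interval_congr hagree).2 (huniv ▸ Set.mem_univ v))
  rw [← actTime_image_union_compl hbd hT]
  omega

end Ball

end TSS

/-- t_τ(G) ≥ k iff there is a vertex v such that in the subgraph
induced on N_k[v] with the restricted thresholds, some target set containing all
vertices at distance exactly k from v has activation time ≥ k. -/
theorem stmt3 {V : Type*} [Fintype V] (G : SimpleGraph V) (τ : V → ℕ)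
    (k : ℕ) (hk : 0 < k) :
    k ≤ TSS.maxTime G τ ↔
      ∃ v : V, ∃ S : Set ↥{u : V | G.dist v u ≤ k},
        (∀ u : ↥{u : V | G.dist v u ≤ k}, G.dist v u.1 = k → u ∈ S) ∧
        TSS.IsTargetSet (G.induce {u : V | G.dist v u ≤ k}) (fun u => τ u.1) S ∧
        k ≤ TSS.actTime (G.induce {u : V | G.dist v u ≤ k}) (fun u => τ u.1) S := by
  classical
  constructor
  · intro hkmax
    obtain ⟨S, hS, hSmax⟩ := exists_actTime_eq_maxTime (G := G) (τ := τ)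
    obtain ⟨v, hv⟩ : ∃ v, v ∉ (interval G τ)^[k - 1] S := by
      have hlate : ¬actTime G τ S ≤ k - 1 := by omega
      rw [actTime_le_iff hS, Set.eq_univ_iff_forall] at hlate
      simpa using hlate
    exact ⟨v, exists_ball_targetSet_le_actTime hS hk hv⟩
  · rintro ⟨v, S, hsphere, hS, hkS⟩
    have hbd := forall_adj_compl_ball_mem hsphere
    rw [← actTime_image_union_compl hbd hS] at hkS
    exact hkS.trans (actTime_le_maxTime ((isTargetSet_image_union_compl_iff hbd).2 hS))
end

section
/- Let T be a tree with at least two vertices, τ a threshold function on T (i.e., 1 ≤ τ(x) ≤ deg(x) for all x), v a leaf of T, and w the unique neighbor of v. Then there exists a proper subset S ⊊ V(T) with v, w ∉ S such that I_τ(S) = S, and S ∪ {v} is a target set of T that activates w at time 1 (i.e., w ∈ I_τ(S ∪ {v})). -/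
/-!
Root the tree at the leaf `v`. Every vertex `x` picks `τ x - 1` of its children, and `S` consists
of the vertices lying below some picked child. A vertex outside `S` has its parent outside `S`
and at most `τ x - 1` neighbours inside it, so `S` is closed. Conversely, once `S ∪ {v}` is
active, a vertex whose parent is active has its parent and its `τ x - 1` picked children active,
so the activation spreads from `v` level by level; in particular `w` is active at time `1`.
-/

namespace SimpleGraph

variable {V : Type*} {G : SimpleGraph V} {r x p q z : V}

theorem Connected.exists_adj_dist_add_one (hG : G.Connected) (hx : x ≠ r) :
    ∃ p, G.Adj x p ∧ G.dist r p + 1 = G.dist r x := by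
  obtain ⟨W, hW⟩ := hG.exists_walk_length_eq_dist x r
  cases W with
  | nil => exact absurd rfl hx
  | cons h W =>
    refine ⟨_, h, ?_⟩
    have hle := dist_le W
    have hdiff := h.diff_dist_adj (u := r)
    rw [dist_comm, Walk.length_cons] at hW
    rw [dist_comm] at hle
    omega

theorem IsAcyclic.eq_of_adj_of_dist_add_one (hG : G.IsAcyclic) (hr : G.Reachable r x)
    (hp : G.Adj x p) (hq : G.Adj x q) (hpd : G.dist r p + 1 = G.dist r x)
    (hqd : G.dist r q + 1 = G.dist r x) : p = q := by
  classical
  obtain ⟨P, hP, -⟩ := hr.exists_path_of_dist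
  -- A shortest path from `r` to a closer neighbour avoids `x`, so that neighbour lies on `P`.
  have penultimate : ∀ y, G.Adj x y → G.dist r y + 1 = G.dist r x → y = P.penultimate := by
    intro y hy hyd
    obtain ⟨Q, hQ, hQlen⟩ := (hr.trans hy.reachable).exists_path_of_dist
    have hxQ : x ∉ Q.support := fun hx ↦ by
      have := dist_le (Q.takeUntil x hx)
      have := Q.length_takeUntil_le_length hx
      omega
    exact hG.eq_penultimate_of_adj_end hP hy
      (hG.mem_support_of_ne_mem_support_of_adj_of_isPath hP hQ hy hxQ)
  exact (penultimate p hp hpd).trans (penultimate q hq hqd).symm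

/-- The neighbour of `x` one step closer to `r`; `x` itself if there is none (e.g. `x = r`). -/
noncomputable def parent (G : SimpleGraph V) (r x : V) : V :=
  open Classical in
  if h : ∃ p, G.Adj x p ∧ G.dist r p + 1 = G.dist r x then h.choose else x

theorem parent_spec (h : ∃ p, G.Adj x p ∧ G.dist r p + 1 = G.dist r x) :
    G.Adj x (G.parent r x) ∧ G.dist r (G.parent r x) + 1 = G.dist r x := by
  rw [parent, dif_pos h]
  exact h.choose_spec

@[simp]
theorem parent_self : G.parent r r = r :=
  dif_neg (by simp)

theorem Connected.adj_parent (hG : G.Connected) (hx : x ≠ r) : G.Adj x (G.parent r x) :=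
  (parent_spec (hG.exists_adj_dist_add_one hx)).1

theorem Connected.dist_parent_lt (hG : G.Connected) (hx : x ≠ r) :
    G.dist r (G.parent r x) < G.dist r x := by
  have := (parent_spec (hG.exists_adj_dist_add_one hx)).2
  omega

theorem IsTree.eq_parent_of_adj (hG : G.IsTree) (hp : G.Adj x p)
    (hpd : G.dist r p + 1 = G.dist r x) : p = G.parent r x :=
  have hspec := parent_spec ⟨p, hp, hpd⟩
  hG.isAcyclic.eq_of_adj_of_dist_add_one (hG.connected r x) hp hspec.1 hpd hspec.2

theorem IsTree.parent_eq_of_adj (hG : G.IsTree) (hxz : G.Adj x z) (hz : z ≠ G.parent r x) :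
    G.parent r z = x := by
  rcases hG.dist_eq_dist_add_one_of_adj r hxz with h | h
  · exact absurd (hG.eq_parent_of_adj hxz h.symm) hz
  · exact (hG.eq_parent_of_adj hxz.symm h.symm).symm

end SimpleGraph

namespace TSS

variable {V : Type*} {G : SimpleGraph V} {τ : V → ℕ}

theorem subset_iterate_interval (A : Set V) (n : ℕ) : A ⊆ (interval G τ)^[n] A := by
  induction n with
  | zero => exact subset_rfl
  | succ n ih =>
    rw [Function.iterate_succ_apply']
    exact ih.trans Set.subset_union_left

/-- The vertices `x` with an ancestor `y = par^[n] x` (possibly `x` itself) in `C (par y)`. -/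
def descendantsOfChosen (par : V → V) (C : V → Set V) : Set V :=
  {x | ∃ n, par^[n] x ∈ C (par^[n + 1] x)}

section Descendants

variable {par : V → V} {C : V → Set V} {r x : V}

theorem mem_descendantsOfChosen :
    x ∈ descendantsOfChosen par C ↔ x ∈ C (par x) ∨ par x ∈ descendantsOfChosen par C := by
  simp only [descendantsOfChosen, Set.mem_ofPred_eq, Function.iterate_succ_apply]
  exact Nat.or_exists_add_one.symm

theorem notMem_descendantsOfChosen (hr : par r = r) (hC : r ∉ C r) :
    r ∉ descendantsOfChosen par C := by
  rintro ⟨n, hn⟩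
  rw [Function.iterate_fixed hr, Function.iterate_fixed hr] at hn
  exact hC hn

variable (hchild : ∀ x z, G.Adj x z → z ≠ par x → par z = x)
include hchild

theorem subset_descendantsOfChosen (hC : ∀ x, C x ⊆ G.neighborSet x \ {par x}) (x : V) :
    C x ⊆ descendantsOfChosen par C := fun z hz ↦ by
  have hpar : par z = x := hchild x z (hC x hz).1 (hC x hz).2
  exact mem_descendantsOfChosen.2 (Or.inl (hpar ▸ hz))

theorem interval_descendantsOfChosen [Finite V] (hC : ∀ x, (C x).ncard < τ x) :
    interval G τ (descendantsOfChosen par C) = descendantsOfChosen par C := by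
  refine Set.union_eq_left.2 fun x (hx : τ x ≤ _) ↦ by_contra fun hxS ↦ ?_
  have hsub : G.neighborSet x ∩ descendantsOfChosen par C ⊆ C x := by
    rintro z ⟨hxz, hzS⟩
    have hz : z ≠ par x := by
      rintro rfl
      exact hxS (mem_descendantsOfChosen.2 (Or.inr hzS))
    rw [mem_descendantsOfChosen, hchild x z hxz hz] at hzS
    exact hzS.resolve_right hxS
  exact (hC x).not_ge (hx.trans (Set.ncard_le_ncard hsub))

end Descendants

theorem mem_iterate_interval_of_le [Finite V] {par : V → V} {C : V → Set V} {r : V}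
    {A : Set V} (d : V → ℕ) (hd : ∀ x ≠ r, d (par x) < d x)
    (hpar : ∀ x ≠ r, G.Adj x (par x)) (hC : ∀ x, C x ⊆ G.neighborSet x \ {par x})
    (hτ : ∀ x, τ x ≤ (C x).ncard + 1) (hrA : r ∈ A) (hCA : ∀ x, C x ⊆ A) :
    ∀ n x, d x ≤ n → x ∈ (interval G τ)^[n] A := by
  intro n
  induction n with
  | zero =>
    intro x hx
    by_cases hxr : x = r
    · exact hxr ▸ hrA
    · exact absurd (hd x hxr) (by omega)
  | succ n ih =>
    intro x hx
    by_cases hxr : x = r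
    · exact subset_iterate_interval A _ (hxr ▸ hrA)
    have hsub : insert (par x) (C x) ⊆ G.neighborSet x ∩ (interval G τ)^[n] A :=
      Set.insert_subset ⟨hpar x hxr, ih _ (by have := hd x hxr; omega)⟩
        fun z hz ↦ ⟨(hC x hz).1, subset_iterate_interval A n (hCA x hz)⟩
    rw [Function.iterate_succ_apply']
    refine Or.inr ((hτ x).trans ?_)
    calc (C x).ncard + 1 = (insert (par x) (C x)).ncard :=
          (Set.ncard_insert_of_notMem fun h ↦ (hC x h).2 rfl).symm
      _ ≤ _ := Set.ncard_le_ncard hsub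

theorem exists_chosen_children [Finite V] (par : V → V)
    (hτ : ∀ x, 1 ≤ τ x ∧ τ x ≤ (G.neighborSet x).ncard) :
    ∃ C : V → Set V, ∀ x, C x ⊆ G.neighborSet x \ {par x} ∧ (C x).ncard + 1 = τ x := by
  have h : ∀ x, ∃ t ⊆ G.neighborSet x \ {par x}, t.ncard = τ x - 1 := fun x ↦
    Set.exists_subset_card_eq
      ((Nat.sub_le_sub_right (hτ x).2 1).trans (Set.pred_ncard_le_ncard_sdiff_singleton _ _))
  choose C hCsub hCcard using h
  exact ⟨C, fun x ↦ ⟨hCsub x, by have := hCcard x; have := (hτ x).1; omega⟩⟩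

end TSS

open TSS

theorem stmt5_general {V : Type*} [Fintype V] (G : SimpleGraph V) (hT : G.IsTree)
    (τ : V → ℕ) (hτ : ∀ x : V, 1 ≤ τ x ∧ τ x ≤ (G.neighborSet x).ncard)
    (v w : V) (hleaf : G.neighborSet v = {w}) :
    ∃ S : Set V, S ⊂ Set.univ ∧ v ∉ S ∧ w ∉ S ∧ TSS.interval G τ S = S ∧
      TSS.IsTargetSet G τ (S ∪ {v}) ∧ w ∈ TSS.interval G τ (S ∪ {v}) := by
  have hvw : G.Adj v w := (G.mem_neighborSet v w).1 (hleaf ▸ rfl)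
  obtain ⟨C, hC⟩ := exists_chosen_children (G.parent v) hτ
  have hchild : ∀ x z, G.Adj x z → z ≠ G.parent v x → G.parent v z = x :=
    fun _ _ ↦ hT.parent_eq_of_adj
  have hCv : C v = ∅ := by
    have := (hC v).2
    have := (hτ v).2
    rw [hleaf, Set.ncard_singleton] at this
    exact (Set.ncard_eq_zero).1 (by omega)
  have hwv : G.parent v w = v :=
    (hT.eq_parent_of_adj hvw.symm (by simp [SimpleGraph.dist_eq_one_iff_adj.2 hvw])).symm
  set S := descendantsOfChosen (G.parent v) C
  have hvS : v ∉ S := notMem_descendantsOfChosen SimpleGraph.parent_self (by simp [hCv])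
  have hwS : w ∉ S := by
    rw [mem_descendantsOfChosen, hwv, hCv]
    simpa using hvS
  have hact := mem_iterate_interval_of_le (G.dist v) (fun _ ↦ hT.connected.dist_parent_lt)
    (fun _ ↦ hT.connected.adj_parent) (fun x ↦ (hC x).1) (fun x ↦ (hC x).2.ge)
    (Set.mem_union_right S (Set.mem_singleton v))
    (fun x ↦ (subset_descendantsOfChosen hchild (fun x ↦ (hC x).1) x).trans Set.subset_union_left)
  refine ⟨S, Set.ssubset_univ_iff.2 fun h ↦ hvS (h ▸ Set.mem_univ v), hvS, hwS,
    interval_descendantsOfChosen hchild fun x ↦ by have := (hC x).2; have := (hτ x).1; omega, ?_,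
    hact 1 w (SimpleGraph.dist_eq_one_iff_adj.2 hvw).le⟩
  exact ⟨Finset.univ.sup (G.dist v),
    Set.eq_univ_of_forall fun x ↦ hact _ x (Finset.le_sup (Finset.mem_univ x))⟩

/-- in a tree with at least two vertices, threshold function τ,
a leaf v with unique neighbor w, there is S ⊊ V with v,w ∉ S, I(S)=S, and
S ∪ {v} a target set activating w at time 1. -/
theorem stmt5 {V : Type*} [Fintype V] (G : SimpleGraph V) (hT : G.IsTree)
    (hcard : 2 ≤ Fintype.card V)
    (τ : V → ℕ) (hτ : ∀ x : V, 1 ≤ τ x ∧ τ x ≤ (G.neighborSet x).ncard)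
    (v w : V) (hleaf : G.neighborSet v = {w}) :
    ∃ S : Set V, S ⊂ Set.univ ∧ v ∉ S ∧ w ∉ S ∧ TSS.interval G τ S = S ∧
      TSS.IsTargetSet G τ (S ∪ {v}) ∧ w ∈ TSS.interval G τ (S ∪ {v}) :=
  stmt5_general G hT τ hτ v w hleaf
end

section
/- Let T be a tree and τ a threshold function on T. Then the maximum activation time t_τ(T) over all target sets equals the maximum number of edges of a path in T all of whose internal vertices v satisfy τ(v) < deg(v). -/
open SimpleGraph

namespace SimpleGraph.IsTree

variable {V : Type*} {G : SimpleGraph V}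

theorem exists_adj_dist_add_one (hT : G.IsTree) (r : V) {x : V} (hx : x ≠ r) :
    ∃ p, G.Adj p x ∧ G.dist r p + 1 = G.dist r x := by
  obtain ⟨w, -, hw⟩ := hT.connected.exists_path_of_dist x r
  obtain ⟨p, hxp, q, rfl⟩ := Walk.exists_eq_cons_of_ne hx w
  have hq : G.dist r p ≤ q.length := dist_comm (G := G) ▸ dist_le q
  rw [Walk.length_cons, dist_comm] at hw
  refine ⟨p, hxp.symm, ?_⟩
  rcases hT.dist_eq_dist_add_one_of_adj r hxp with h | h <;> omega

theorem eq_of_adj_of_dist_add_one (hT : G.IsTree) {r x p q : V} (hp : G.Adj p x)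
    (hq : G.Adj q x) (hdp : G.dist r p + 1 = G.dist r x) (hdq : G.dist r q + 1 = G.dist r x) :
    p = q := by
  obtain ⟨P, -, hP⟩ := hT.connected.exists_path_of_dist r p
  obtain ⟨Q, -, hQ⟩ := hT.connected.exists_path_of_dist r q
  have hPx := (P.concat hp).isPath_of_length_eq_dist (by rw [Walk.length_concat]; omega)
  have hQx := (Q.concat hq).isPath_of_length_eq_dist (by rw [Walk.length_concat]; omega)
  have h := congrArg (fun w : G.Path r x => w.1.penultimate)
    ((hT.isAcyclic.subsingleton_path r x).elim ⟨_, hPx⟩ ⟨_, hQx⟩)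
  simpa using h

theorem dist_eq_of_chain (hT : G.IsTree) {vs : ℕ → V} {n : ℕ}
    (hinj : ∀ i ≤ n, ∀ j ≤ n, vs i = vs j → i = j) (hadj : ∀ i < n, G.Adj (vs i) (vs (i + 1))) :
    ∀ j ≤ n, G.dist (vs 0) (vs j) = j
  | 0, _ => dist_self
  | 1, h1 => dist_eq_one_iff_adj.2 (hadj 0 h1)
  | j + 2, hj => by
    have hj₀ := dist_eq_of_chain hT hinj hadj j (by omega)
    have hj₁ := dist_eq_of_chain hT hinj hadj (j + 1) (by omega)
    have hadj' : G.Adj (vs (j + 1)) (vs (j + 2)) := hadj (j + 1) (by omega)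
    rcases hT.dist_eq_dist_add_one_of_adj (vs 0) hadj' with h | h
    · -- otherwise `vs j` and `vs (j + 2)` would both be the parent of `vs (j + 1)`
      have := hT.eq_of_adj_of_dist_add_one (hadj j (by omega)) hadj'.symm (by omega) h.symm
      have := hinj j (by omega) (j + 2) hj this
      omega
    · omega

end SimpleGraph.IsTree

namespace TSS

variable {V : Type*}

def IsUnsaturatedPath (G : SimpleGraph V) (τ : V → ℕ) (vs : ℕ → V) (n : ℕ) : Prop :=
  (∀ i ≤ n, ∀ j ≤ n, vs i = vs j → i = j) ∧
  (∀ i < n, G.Adj (vs i) (vs (i + 1))) ∧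
  (∀ i : ℕ, 0 < i → i < n → τ (vs i) < (G.neighborSet (vs i)).ncard)

theorem isUnsaturatedPath_zero (G : SimpleGraph V) (τ : V → ℕ) (vs : ℕ → V) :
    IsUnsaturatedPath G τ vs 0 :=
  ⟨fun i hi j hj _ => by omega, fun i hi => by omega, fun i hi hi' => by omega⟩

theorem bddAbove_isUnsaturatedPath [Finite V] (G : SimpleGraph V) (τ : V → ℕ) :
    BddAbove {n | ∃ vs, IsUnsaturatedPath G τ vs n} := by
  refine ⟨Nat.card V, ?_⟩
  rintro n ⟨vs, hinj, -, -⟩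
  have hcard := Nat.card_le_card_of_injective (fun i : Fin (n + 1) => vs i)
    fun i j h => Fin.ext (hinj i (by omega) j (by omega) h)
  rw [Nat.card_fin] at hcard
  omega

section Activation

variable {G : SimpleGraph V} {τ : V → ℕ} {S : Set V}

theorem monotone_iterate_interval : Monotone fun t => (interval G τ)^[t] S :=
  monotone_nat_of_le_succ fun t => by
    rw [Function.iterate_succ_apply']
    exact Set.subset_union_left

theorem actTime_le_of_iterate_succ_eq {t : ℕ}
    (h : (interval G τ)^[t + 1] S = (interval G τ)^[t] S) : actTime G τ S ≤ t :=
  Nat.sInf_le h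

theorem IsTargetSet.iterate_actTime_succ (hS : IsTargetSet G τ S) :
    (interval G τ)^[actTime G τ S + 1] S = (interval G τ)^[actTime G τ S] S := by
  obtain ⟨t, ht⟩ := hS
  refine Nat.sInf_mem (s := {t | (interval G τ)^[t + 1] S = (interval G τ)^[t] S}) ⟨t, ?_⟩
  rw [Set.mem_ofPred_eq, Function.iterate_succ_apply', ht]
  exact Set.univ_union _

theorem IsTargetSet.le_actTime (hS : IsTargetSet G τ S) {n : ℕ}
    (h : ∀ t < n, (interval G τ)^[t + 1] S ≠ (interval G τ)^[t] S) : n ≤ actTime G τ S := by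
  by_contra! hlt
  exact h _ hlt hS.iterate_actTime_succ

def activatedAt (G : SimpleGraph V) (τ : V → ℕ) (S : Set V) (t : ℕ) : Set V :=
  {v | v ∈ (interval G τ)^[t] S ∧ ∀ s < t, v ∉ (interval G τ)^[s] S}

theorem mem_activatedAt_succ {v : V} {t : ℕ} (h : v ∈ (interval G τ)^[t + 1] S)
    (h' : v ∉ (interval G τ)^[t] S) : v ∈ activatedAt G τ S (t + 1) :=
  ⟨h, fun _ hs hv => h' (monotone_iterate_interval (Nat.le_of_lt_succ hs) hv)⟩

theorem eq_of_mem_activatedAt {v : V} {i j : ℕ} (hi : v ∈ activatedAt G τ S i)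
    (hj : v ∈ activatedAt G τ S j) : i = j := by
  rcases lt_trichotomy i j with h | h | h
  · exact absurd hi.1 (hj.2 i h)
  · exact h
  · exact absurd hj.1 (hi.2 j h)

theorem ncard_le_of_mem_activatedAt_succ {v : V} {t : ℕ} (hv : v ∈ activatedAt G τ S (t + 1)) :
    τ v ≤ (G.neighborSet v ∩ (interval G τ)^[t] S).ncard := by
  have h := hv.1
  rw [Function.iterate_succ_apply'] at h
  exact h.resolve_left (hv.2 t t.lt_succ_self)

theorem exists_adj_mem_activatedAt [Finite V] (hτ : ∀ x, 1 ≤ τ x) {v : V} {t : ℕ}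
    (hv : v ∈ activatedAt G τ S (t + 1)) : ∃ u, G.Adj v u ∧ u ∈ activatedAt G τ S t := by
  have hτv := ncard_le_of_mem_activatedAt_succ hv
  by_contra! hno
  have hearly : ∀ u ∈ G.neighborSet v ∩ (interval G τ)^[t] S,
      ∃ s < t, u ∈ (interval G τ)^[s] S := by
    rintro u ⟨hu, hut⟩
    by_contra! h
    exact hno u hu ⟨hut, h⟩
  obtain ⟨u, hu⟩ : (G.neighborSet v ∩ (interval G τ)^[t] S).Nonempty :=
    Set.nonempty_of_ncard_ne_zero (by have := hτ v; omega)
  obtain ⟨t, rfl⟩ : ∃ t', t = t' + 1 := by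
    obtain ⟨s, hs, -⟩ := hearly u hu
    exact ⟨t - 1, by omega⟩
  -- every active neighbour of `v` was already active at time `t`, hence so was `v`
  have hsub : G.neighborSet v ∩ (interval G τ)^[t + 1] S ⊆
      G.neighborSet v ∩ (interval G τ)^[t] S := fun u hu => ⟨hu.1, by
      obtain ⟨s, hs, hus⟩ := hearly u hu
      exact monotone_iterate_interval (Nat.le_of_lt_succ hs) hus⟩
  apply hv.2 (t + 1) (Nat.lt_succ_self _)
  rw [Function.iterate_succ_apply']
  exact Or.inr (hτv.trans (Set.ncard_le_ncard hsub))

theorem exists_chain_of_mem_activatedAt [Finite V] (hτ : ∀ x, 1 ≤ τ x) :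
    ∀ {k : ℕ} {v : V}, v ∈ activatedAt G τ S k → ∃ ws : ℕ → V, ws k = v ∧
      (∀ i ≤ k, ws i ∈ activatedAt G τ S i) ∧ ∀ i < k, G.Adj (ws i) (ws (i + 1))
  | 0, v, hv => ⟨fun _ => v, rfl, fun i hi => by rwa [Nat.le_zero.1 hi], fun i hi => by omega⟩
  | k + 1, v, hv => by
    obtain ⟨u, hvu, hu⟩ := exists_adj_mem_activatedAt hτ hv
    obtain ⟨ws, rfl, hmem, hadj⟩ := exists_chain_of_mem_activatedAt hτ hu
    refine ⟨Function.update ws (k + 1) v, by simp, fun i hi => ?_, fun i hi => ?_⟩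
    · rcases Nat.le_succ_iff.1 hi with hi | rfl
      · rw [Function.update_of_ne (by omega)]
        exact hmem i hi
      · simpa using hv
    · rw [Function.update_of_ne (by omega)]
      rcases Nat.lt_succ_iff_lt_or_eq.1 hi with hi | rfl
      · rw [Function.update_of_ne (by omega)]
        exact hadj i hi
      · simpa using hvu.symm

theorem isUnsaturatedPath_of_chain [Finite V] {ws : ℕ → V} {k : ℕ}
    (hmem : ∀ i ≤ k, ws i ∈ activatedAt G τ S i) (hadj : ∀ i < k, G.Adj (ws i) (ws (i + 1))) :
    IsUnsaturatedPath G τ ws k := by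
  refine ⟨fun i hi j hj h => eq_of_mem_activatedAt (hmem i hi) (h ▸ hmem j hj), hadj,
    fun i hi hik => ?_⟩
  obtain ⟨i, rfl⟩ : ∃ i', i = i' + 1 := ⟨i - 1, by omega⟩
  have hnext : ws (i + 2) ∉ (interval G τ)^[i] S := (hmem (i + 2) hik).2 i (by omega)
  calc τ (ws (i + 1)) ≤ (G.neighborSet (ws (i + 1)) ∩ (interval G τ)^[i] S).ncard :=
        ncard_le_of_mem_activatedAt_succ (hmem (i + 1) hik.le)
    _ < (G.neighborSet (ws (i + 1))).ncard :=
        Set.ncard_lt_ncard ⟨Set.inter_subset_left, fun h => hnext (h (hadj (i + 1) hik)).2⟩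

theorem exists_mem_activatedAt_actTime (hk : actTime G τ S ≠ 0) :
    ∃ v, v ∈ activatedAt G τ S (actTime G τ S) := by
  obtain ⟨t, ht⟩ := Nat.exists_eq_succ_of_ne_zero hk
  have hne : (interval G τ)^[t + 1] S ≠ (interval G τ)^[t] S := fun h => by
    have := actTime_le_of_iterate_succ_eq h
    omega
  obtain ⟨v, hv, hv'⟩ :=
    Set.exists_of_ssubset ((monotone_iterate_interval t.le_succ).ssubset_of_ne hne.symm)
  exact ⟨v, ht ▸ mem_activatedAt_succ hv hv'⟩

theorem exists_isUnsaturatedPath_actTime [Finite V] [Nonempty V] (hτ : ∀ x, 1 ≤ τ x) :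
    ∃ vs, IsUnsaturatedPath G τ vs (actTime G τ S) := by
  rcases eq_or_ne (actTime G τ S) 0 with h0 | h0
  · exact ⟨fun _ => Classical.arbitrary V, h0 ▸ isUnsaturatedPath_zero G τ _⟩
  · obtain ⟨v, hv⟩ := exists_mem_activatedAt_actTime h0
    obtain ⟨ws, -, hmem, hadj⟩ := exists_chain_of_mem_activatedAt hτ hv
    exact ⟨ws, isUnsaturatedPath_of_chain hmem hadj⟩

theorem iterate_interval_eq_of_level [Finite V] (f : V → ℕ)
    (hlow : ∀ x, 0 < f x → τ x ≤ (G.neighborSet x ∩ {y | f y < f x}).ncard)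
    (hhigh : ∀ x, 0 < f x → (G.neighborSet x ∩ {y | f y + 1 < f x}).ncard < τ x) :
    ∀ t, (interval G τ)^[t] {x | f x = 0} = {x | f x ≤ t}
  | 0 => by simp
  | t + 1 => by
    rw [Function.iterate_succ_apply', iterate_interval_eq_of_level f hlow hhigh t]
    ext x
    simp only [interval, Set.mem_union, Set.mem_ofPred_eq]
    constructor
    · rintro (hx | hx)
      · omega
      · by_contra! hx'
        have hsub : G.neighborSet x ∩ {y | f y ≤ t} ⊆ G.neighborSet x ∩ {y | f y + 1 < f x} :=
          Set.inter_subset_inter_right _ fun y (hy : f y ≤ t) => show f y + 1 < f x by omega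
        exact (hx.trans (Set.ncard_le_ncard hsub)).not_gt (hhigh x (by omega))
    · intro hx
      rcases Nat.lt_or_eq_of_le hx with hx | hx
      · exact Or.inl (by omega)
      · have h := hlow x (by omega)
        simp only [hx, Nat.lt_succ_iff] at h
        exact Or.inr h

end Activation

def children (G : SimpleGraph V) (r x : V) : Set V :=
  {c | G.Adj x c ∧ G.dist r c = G.dist r x + 1}

theorem ncard_children_add_one [Finite V] {G : SimpleGraph V} (hT : G.IsTree) {r x : V}
    (hx : x ≠ r) : (children G r x).ncard + 1 = (G.neighborSet x).ncard := by
  obtain ⟨p, hpx, hp⟩ := hT.exists_adj_dist_add_one r hx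
  have : children G r x = G.neighborSet x \ {p} := by
    ext c
    simp only [children, Set.mem_ofPred_eq, Set.mem_sdiff, mem_neighborSet, Set.mem_singleton_iff]
    refine ⟨fun ⟨hc, hd⟩ => ⟨hc, by rintro rfl; omega⟩, fun ⟨hc, hcp⟩ => ⟨hc, ?_⟩⟩
    rcases hT.dist_eq_dist_add_one_of_adj r hc with h | h
    · exact absurd (hT.eq_of_adj_of_dist_add_one hc.symm hpx h.symm hp) hcp
    · exact h
  rw [this]
  exact Set.ncard_sdiff_singleton_add_one hpx.symm

-- `K x` holds the children of `x` that are marked dead.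
inductive Live (G : SimpleGraph V) (r v₁ : V) (K : V → Set V) : V → Prop
  | base : Live G r v₁ K v₁
  | step {x c : V} : Live G r v₁ K x → c ∈ children G r x → c ∉ K x → Live G r v₁ K c

open Classical in
noncomputable def liveLevel (G : SimpleGraph V) (r v₁ : V) (K : V → Set V) (x : V) : ℕ :=
  if Live G r v₁ K x then G.dist r x else 0

section Live

variable {G : SimpleGraph V} {r v₁ x : V} {K : V → Set V}

theorem Live.dist_pos (hv₁ : G.Adj r v₁) (hx : Live G r v₁ K x) : 0 < G.dist r x := by
  induction hx with
  | base => rw [dist_eq_one_iff_adj.2 hv₁]; exact one_pos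
  | step _ hc _ _ => rw [hc.2]; exact Nat.succ_pos _

theorem Live.ne_root (hv₁ : G.Adj r v₁) (hx : Live G r v₁ K x) : x ≠ r := by
  rintro rfl
  simpa using hx.dist_pos hv₁

theorem Live.of_adj_dist_add_one (hT : G.IsTree) (hv₁ : G.Adj r v₁) (hx : Live G r v₁ K x)
    (h2 : 2 ≤ G.dist r x) {y : V} (hyx : G.Adj y x) (hd : G.dist r y + 1 = G.dist r x) :
    Live G r v₁ K y := by
  cases hx with
  | base => rw [dist_eq_one_iff_adj.2 hv₁] at h2; omega
  | step hx' hc _ => rwa [hT.eq_of_adj_of_dist_add_one hyx hc.1 hd hc.2.symm]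

theorem Live.live_child_iff (hT : G.IsTree) (hv₁ : G.Adj r v₁) (hx : Live G r v₁ K x)
    {c : V} (hc : c ∈ children G r x) : Live G r v₁ K c ↔ c ∉ K x := by
  refine ⟨fun hlc => ?_, hx.step hc⟩
  cases hlc with
  | base =>
    have := hx.dist_pos hv₁
    have := hc.2
    rw [dist_eq_one_iff_adj.2 hv₁] at this
    omega
  | step _ hc' hK => rwa [hT.eq_of_adj_of_dist_add_one hc.1 hc'.1 hc.2.symm hc'.2.symm]

theorem liveLevel_of_live (h : Live G r v₁ K x) : liveLevel G r v₁ K x = G.dist r x :=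
  if_pos h

theorem liveLevel_of_not_live (h : ¬Live G r v₁ K x) : liveLevel G r v₁ K x = 0 :=
  if_neg h

theorem live_of_liveLevel_pos (h : 0 < liveLevel G r v₁ K x) : Live G r v₁ K x := by
  by_contra hx
  rw [liveLevel_of_not_live hx] at h
  exact h.false

theorem liveLevel_le_dist (y : V) : liveLevel G r v₁ K y ≤ G.dist r y := by
  by_cases h : Live G r v₁ K y
  · exact (liveLevel_of_live h).le
  · rw [liveLevel_of_not_live h]
    exact Nat.zero_le _

variable [Finite V] {τ : V → ℕ} (hT : G.IsTree) (hv₁ : G.Adj r v₁)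
  (hK : ∀ x, x ≠ r → K x ⊆ children G r x ∧ (K x).ncard + 1 = τ x)
include hT hv₁ hK

theorem le_ncard_neighborSet_liveLevel_lt (hx : 0 < liveLevel G r v₁ K x) :
    τ x ≤ (G.neighborSet x ∩ {y | liveLevel G r v₁ K y < liveLevel G r v₁ K x}).ncard := by
  have hlx := live_of_liveLevel_pos hx
  obtain ⟨hKc, hKcard⟩ := hK x (hlx.ne_root hv₁)
  obtain ⟨p, hpx, hp⟩ := hT.exists_adj_dist_add_one r (hlx.ne_root hv₁)
  rw [liveLevel_of_live hlx]
  have hsub : insert p (K x) ⊆ G.neighborSet x ∩ {y | liveLevel G r v₁ K y < G.dist r x} := by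
    rintro y (rfl | hy)
    · exact ⟨hpx.symm, (liveLevel_le_dist y).trans_lt (by omega)⟩
    · have hdead : ¬Live G r v₁ K y := fun h => (hlx.live_child_iff hT hv₁ (hKc hy)).1 h hy
      exact ⟨(hKc hy).1, by rw [Set.mem_ofPred_eq, liveLevel_of_not_live hdead]; omega⟩
  have hpK : p ∉ K x := fun h => by have := (hKc h).2; omega
  calc τ x = (insert p (K x)).ncard := by rw [Set.ncard_insert_of_notMem hpK]; omega
    _ ≤ _ := Set.ncard_le_ncard hsub

theorem ncard_neighborSet_liveLevel_add_one_lt_lt (hx : 0 < liveLevel G r v₁ K x) :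
    (G.neighborSet x ∩ {y | liveLevel G r v₁ K y + 1 < liveLevel G r v₁ K x}).ncard < τ x := by
  have hlx := live_of_liveLevel_pos hx
  obtain ⟨hKc, hKcard⟩ := hK x (hlx.ne_root hv₁)
  rw [liveLevel_of_live hlx]
  have hsub : G.neighborSet x ∩ {y | liveLevel G r v₁ K y + 1 < G.dist r x} ⊆ K x := by
    rintro y ⟨hxy, hy⟩
    rw [Set.mem_ofPred_eq] at hy
    rcases hT.dist_eq_dist_add_one_of_adj r hxy with hup | hdown
    · have hly := hlx.of_adj_dist_add_one hT hv₁ (by omega) hxy.symm hup.symm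
      rw [liveLevel_of_live hly] at hy
      omega
    · by_contra hyK
      have hly := (hlx.live_child_iff hT hv₁ ⟨hxy, hdown⟩).2 hyK
      rw [liveLevel_of_live hly] at hy
      omega
  calc _ ≤ (K x).ncard := Set.ncard_le_ncard hsub
    _ < τ x := by omega

end Live

section LowerBound

variable {G : SimpleGraph V} {τ : V → ℕ} {vs : ℕ → V} {n : ℕ}

theorem exists_dead_children [Finite V] (hT : G.IsTree)
    (hτ : ∀ x, 1 ≤ τ x ∧ τ x ≤ (G.neighborSet x).ncard) (hp : IsUnsaturatedPath G τ vs n) :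
    ∃ K : V → Set V, (∀ x, x ≠ vs 0 → K x ⊆ children G (vs 0) x ∧ (K x).ncard + 1 = τ x) ∧
      ∀ j, 0 < j → j < n → vs (j + 1) ∉ K (vs j) := by
  obtain ⟨hinj, hadj, hns⟩ := hp
  suffices h : ∀ x, ∃ Kx : Set V, (x ≠ vs 0 → Kx ⊆ children G (vs 0) x ∧ Kx.ncard + 1 = τ x) ∧
      ∀ j, 0 < j → j < n → vs j = x → vs (j + 1) ∉ Kx by
    choose K hK hKpath using h
    exact ⟨K, hK, fun j hj₀ hjn => hKpath _ j hj₀ hjn rfl⟩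
  intro x
  by_cases hx : x = vs 0
  · exact ⟨∅, fun h => absurd hx h, fun _ _ _ _ => Set.notMem_empty _⟩
  have hch := ncard_children_add_one hT hx
  have hτx := hτ x
  by_cases hint : ∃ j, 0 < j ∧ j < n ∧ vs j = x
  · obtain ⟨j, hj₀, hjn, rfl⟩ := hint
    have hdist := hT.dist_eq_of_chain hinj hadj
    have hmem : vs (j + 1) ∈ children G (vs 0) (vs j) :=
      ⟨hadj j hjn, by rw [hdist j hjn.le, hdist (j + 1) hjn]⟩
    have hns' := hns j hj₀ hjn
    obtain ⟨Kx, hsub, hcard⟩ :=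
      Set.exists_subset_card_eq (s := children G (vs 0) (vs j) \ {vs (j + 1)})
        (n := τ (vs j) - 1) (by rw [Set.ncard_sdiff_singleton_of_mem hmem]; omega)
    refine ⟨Kx, fun _ => ⟨hsub.trans Set.sdiff_subset, by omega⟩, fun i _ hin hij hK => ?_⟩
    obtain rfl := hinj i hin.le j hjn.le hij
    exact (hsub hK).2 rfl
  · obtain ⟨Kx, hsub, hcard⟩ :=
      Set.exists_subset_card_eq (s := children G (vs 0) x) (n := τ x - 1) (by omega)
    exact ⟨Kx, fun _ => ⟨hsub, by omega⟩, fun j hj₀ hjn hjx => (hint ⟨j, hj₀, hjn, hjx⟩).elim⟩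

theorem live_of_isUnsaturatedPath (hT : G.IsTree) (hp : IsUnsaturatedPath G τ vs n)
    {K : V → Set V} (hK : ∀ j, 0 < j → j < n → vs (j + 1) ∉ K (vs j)) :
    ∀ j, 0 < j → j ≤ n → Live G (vs 0) (vs 1) K (vs j)
  | 0, h, _ => absurd h (lt_irrefl 0)
  | 1, _, _ => .base
  | j + 2, _, hj => by
    have hdist := hT.dist_eq_of_chain hp.1 hp.2.1
    refine (live_of_isUnsaturatedPath hT hp hK (j + 1) (by omega) (by omega)).step
      ⟨hp.2.1 (j + 1) hj, ?_⟩ (hK (j + 1) (by omega) hj)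
    rw [hdist (j + 1) (by omega), hdist (j + 2) hj]

theorem exists_isTargetSet_le_actTime [Finite V] (hT : G.IsTree)
    (hτ : ∀ x, 1 ≤ τ x ∧ τ x ≤ (G.neighborSet x).ncard) (hn : 0 < n)
    (hp : IsUnsaturatedPath G τ vs n) : ∃ S, IsTargetSet G τ S ∧ n ≤ actTime G τ S := by
  obtain ⟨K, hK, hKpath⟩ := exists_dead_children hT hτ hp
  have hv₁ : G.Adj (vs 0) (vs 1) := hp.2.1 0 hn
  have hf : ∀ j, 0 < j → j ≤ n → liveLevel G (vs 0) (vs 1) K (vs j) = j := fun j hj₀ hjn => by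
    rw [liveLevel_of_live (live_of_isUnsaturatedPath hT hp hKpath j hj₀ hjn),
      hT.dist_eq_of_chain hp.1 hp.2.1 j hjn]
  set f := liveLevel G (vs 0) (vs 1) K
  have hA := iterate_interval_eq_of_level f
    (fun _ => le_ncard_neighborSet_liveLevel_lt hT hv₁ hK)
    (fun _ => ncard_neighborSet_liveLevel_add_one_lt_lt hT hv₁ hK)
  have : Nonempty V := ⟨vs 0⟩
  obtain ⟨m, hm⟩ := Finite.exists_max f
  have hS : IsTargetSet G τ {x | f x = 0} := ⟨f m, by rw [hA]; exact Set.eq_univ_of_forall hm⟩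
  refine ⟨_, hS, hS.le_actTime fun t ht h => ?_⟩
  have hmem : vs (t + 1) ∈ (interval G τ)^[t + 1] {x | f x = 0} := by
    rw [hA]
    exact (hf (t + 1) (by omega) ht).le
  rw [h, hA, Set.mem_ofPred_eq, hf (t + 1) (by omega) ht] at hmem
  omega

end LowerBound

end TSS

open TSS

/-- in a tree with threshold function τ, the maximum activation time
equals the maximum number of edges of a path all of whose internal vertices are
non-saturated. -/
theorem stmt7 {V : Type*} [Fintype V] (G : SimpleGraph V) (hT : G.IsTree)
    (τ : V → ℕ) (hτ : ∀ x : V, 1 ≤ τ x ∧ τ x ≤ (G.neighborSet x).ncard) :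
    TSS.maxTime G τ =
      sSup {n : ℕ | ∃ vs : ℕ → V,
        (∀ i ≤ n, ∀ j ≤ n, vs i = vs j → i = j) ∧
        (∀ i < n, G.Adj (vs i) (vs (i + 1))) ∧
        (∀ i : ℕ, 0 < i → i < n → τ (vs i) < (G.neighborSet (vs i)).ncard)} := by
  have : Nonempty V := hT.connected.nonempty
  change sSup {t | ∃ S, IsTargetSet G τ S ∧ actTime G τ S = t} =
    sSup {n | ∃ vs, IsUnsaturatedPath G τ vs n}
  have hupper : ∀ t ∈ {t | ∃ S, IsTargetSet G τ S ∧ actTime G τ S = t},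
      t ≤ sSup {n | ∃ vs, IsUnsaturatedPath G τ vs n} := by
    rintro _ ⟨S, -, rfl⟩
    exact le_csSup (bddAbove_isUnsaturatedPath G τ)
      (exists_isUnsaturatedPath_actTime (S := S) fun x => (hτ x).1)
  refine le_antisymm (csSup_le' hupper) (csSup_le' ?_)
  rintro n ⟨vs, hp⟩
  rcases Nat.eq_zero_or_pos n with rfl | hn
  · exact Nat.zero_le _
  obtain ⟨S, hS, hnS⟩ := exists_isTargetSet_le_actTime hT hτ hn hp
  exact hnS.trans (le_csSup ⟨_, hupper⟩ ⟨S, hS, rfl⟩)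
end
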